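/- For the similarity graph G built on a finite nonempty vertex set, the domination number equals the independent domination number and is at least half of the independence number: γ(G) = i(G) ≥ α(G)/2. -/

import Mathlib

/-!
Neighbours of a common vertex `v` of the similarity graph have `μ`-values in the open interval
of length `2ε` around `μ v`, so no three of them are pairwise non-adjacent: the graph is
claw-free. In a claw-free graph a vertex dominates at most two vertices of an independent set,
whence `α ≤ 2γ`; and `γ = i` (Allan–Laskar): given a dominating set `S`, extend a maximal
independent subset `I` of `S` to a maximal independent set `T`. Every vertex of `T \ I` is
dominated by a vertex of `S \ I`, and a vertex of `S \ I`, having a neighbour in `I`, can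
dominate only one vertex of `T \ I` without creating a claw.
-/

open Finset

lemma abs_sub_lt_or_abs_sub_lt_or_abs_sub_lt {x y z c ε : ℝ}
    (hx : |x - c| < ε) (hy : |y - c| < ε) (hz : |z - c| < ε) :
    |x - y| < ε ∨ |x - z| < ε ∨ |y - z| < ε := by
  -- two of the three points lie on the same side of `c`
  by_contra! ⟨hxy, hxz, hyz⟩
  rw [abs_sub_lt_iff] at hx hy hz
  rw [le_abs] at hxy hxz hyz
  rcases hxy with hxy | hxy <;> rcases hxz with hxz | hxz <;> rcases hyz with hyz | hyz <;>
    linarith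

namespace SimpleGraph

variable {V : Type*} (G : SimpleGraph V)

def IsClawFree : Prop :=
  ∀ (v : V) (s : Finset V), ↑s ⊆ G.neighborSet v → G.IsIndepSet ↑s → #s ≤ 2

def IsDominating (S : Finset V) : Prop :=
  ∀ v, v ∉ S → ∃ u ∈ S, G.Adj u v

variable {G}

lemma isClawFree_of_adj_iff_abs_sub_lt (μ : V → ℝ) (ε : ℝ)
    (hG : ∀ i j : V, G.Adj i j ↔ i ≠ j ∧ |μ i - μ j| < ε) : G.IsClawFree := by
  intro v s hsv hs
  by_contra! h
  obtain ⟨a, ha, b, hb, c, hc, hab, hac, hbc⟩ := two_lt_card.mp h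
  have close : ∀ x ∈ s, |μ x - μ v| < ε := fun x hx =>
    abs_sub_comm (μ v) (μ x) ▸ ((hG v x).mp (hsv hx)).2
  have far : ∀ x ∈ s, ∀ y ∈ s, x ≠ y → ¬ |μ x - μ y| < ε := fun x hx y hy hxy hlt =>
    hs hx hy hxy ((hG x y).mpr ⟨hxy, hlt⟩)
  rcases abs_sub_lt_or_abs_sub_lt_or_abs_sub_lt (close a ha) (close b hb) (close c hc) with
    h | h | h
  · exact far a ha b hb hab h
  · exact far a ha c hc hac h
  · exact far b hb c hc hbc h

lemma IsClawFree.card_le_two_of_forall_eq_or_adj (hG : G.IsClawFree) {s : Finset V} {v : V}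
    (hs : G.IsIndepSet ↑s) (hsv : ∀ a ∈ s, a = v ∨ G.Adj v a) : #s ≤ 2 := by
  by_cases hv : v ∈ s
  · calc #s ≤ #{v} := card_le_card fun a ha => by
          rcases hsv a ha with rfl | hva
          · exact mem_singleton_self a
          · exact absurd hva (hs hv ha hva.ne)
      _ ≤ 2 := by simp
  · refine hG v s (fun a ha => ?_) hs
    rcases hsv a ha with rfl | hva
    · exact absurd ha hv
    · exact hva

lemma IsClawFree.card_le_two_mul_of_isDominating (hG : G.IsClawFree) {S P : Finset V}
    (hS : G.IsDominating S) (hP : G.IsIndepSet ↑P) : #P ≤ 2 * #S := by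
  classical
  have := card_mul_le_card_mul (fun a u => a = u ∨ G.Adj u a) (m := 1) (n := 2) (s := P) (t := S)
    (fun a _ => ?_) (fun u _ => ?_)
  · omega
  · by_cases haS : a ∈ S
    · exact one_le_card.mpr ⟨a, (mem_bipartiteAbove _).mpr ⟨haS, Or.inl rfl⟩⟩
    · obtain ⟨u, huS, hua⟩ := hS a haS
      exact one_le_card.mpr ⟨u, (mem_bipartiteAbove _).mpr ⟨huS, Or.inr hua⟩⟩
  · exact hG.card_le_two_of_forall_eq_or_adj (hP.mono (coe_subset.mpr (filter_subset _ _)))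
      fun a ha => ((mem_bipartiteBelow _).mp ha).2

lemma exists_adj_of_maximal_isIndepSet {S I : Finset V}
    (hI : Maximal (fun J : Finset V => G.IsIndepSet ↑J ∧ J ⊆ S) I) {v : V}
    (hvS : v ∈ S) (hvI : v ∉ I) : ∃ x ∈ I, G.Adj x v := by
  classical
  by_contra! h
  have hins : G.IsIndepSet ↑(insert v I) ∧ insert v I ⊆ S := by
    refine ⟨?_, insert_subset hvS hI.1.2⟩
    rw [coe_insert]
    exact hI.1.1.insert fun x hx _ => ⟨fun hvx => h x hx hvx.symm, h x hx⟩
  exact hvI (hI.2 hins (subset_insert v I) (mem_insert_self v I))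

lemma IsClawFree.card_sdiff_le_card_sdiff_of_maximal [DecidableEq V] (hG : G.IsClawFree)
    {S I T : Finset V}
    (hS : G.IsDominating S) (hI : Maximal (fun J : Finset V => G.IsIndepSet ↑J ∧ J ⊆ S) I)
    (hT : G.IsIndepSet ↑T) (hIT : I ⊆ T) : #(T \ I) ≤ #(S \ I) := by
  classical
  have := card_mul_le_card_mul (fun t u => G.Adj u t) (m := 1) (n := 1) (s := T \ I) (t := S \ I)
    (fun t ht => ?_) (fun u hu => ?_)
  · omega
  · obtain ⟨htT, htI⟩ := mem_sdiff.mp ht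
    have htS : t ∉ S := fun htS => by
      obtain ⟨x, hxI, hxt⟩ := exists_adj_of_maximal_isIndepSet hI htS htI
      exact hT (hIT hxI) htT hxt.ne hxt
    obtain ⟨u, huS, hut⟩ := hS t htS
    have huI : u ∉ I := fun huI => hT (hIT huI) htT hut.ne hut
    exact one_le_card.mpr
      ⟨u, (mem_bipartiteAbove _).mpr ⟨mem_sdiff.mpr ⟨huS, huI⟩, hut⟩⟩
  · obtain ⟨huS, huI⟩ := mem_sdiff.mp hu
    obtain ⟨x, hxI, hxu⟩ := exists_adj_of_maximal_isIndepSet hI huS huI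
    set F := (T \ I).bipartiteBelow (fun t u => G.Adj u t) u
    have hFT : F ⊆ T := (filter_subset _ _).trans sdiff_subset
    have hxF : x ∉ F := fun hxF => (mem_sdiff.mp (filter_subset _ _ hxF)).2 hxI
    have := hG u (insert x F) (fun a ha => ?_)
      (hT.mono (coe_subset.mpr (insert_subset (hIT hxI) hFT)))
    · rw [card_insert_of_notMem hxF] at this
      omega
    · rcases mem_insert.mp ha with rfl | haF
      · exact hxu.symm
      · exact ((mem_bipartiteBelow _).mp haF).2

lemma IsClawFree.exists_isIndepSet_isDominating_card_le [Fintype V] (hG : G.IsClawFree)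
    {S : Finset V} (hS : G.IsDominating S) :
    ∃ T : Finset V, G.IsDominating T ∧ G.IsIndepSet ↑T ∧ #T ≤ #S := by
  classical
  obtain ⟨I, -, hI⟩ := Finite.exists_le_maximal
    (p := fun J : Finset V => G.IsIndepSet ↑J ∧ J ⊆ S) (a := ∅)
    ⟨by simp, empty_subset S⟩
  obtain ⟨T, hIT, hT⟩ := Finite.exists_le_maximal
    (p := fun J : Finset V => G.IsIndepSet ↑J ∧ J ⊆ univ) ⟨hI.1.1, subset_univ I⟩
  refine ⟨T, fun v hv => exists_adj_of_maximal_isIndepSet hT (mem_univ v) hv, hT.1.1, ?_⟩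
  calc #T = #(T \ I) + #I := (card_sdiff_add_card_eq_card hIT).symm
    _ ≤ #(S \ I) + #I := by
        gcongr 1
        exact hG.card_sdiff_le_card_sdiff_of_maximal hS hI hT.1.1 hIT
    _ = #S := card_sdiff_add_card_eq_card hI.1.2

end SimpleGraph

open SimpleGraph in
theorem similarity_graph_domination_numbers_general {V : Type*} [Fintype V]
    (μ : V → ℝ) (ε : ℝ) (G : SimpleGraph V)
    (hG : ∀ i j : V, G.Adj i j ↔ i ≠ j ∧ |μ i - μ j| < ε) :
    sInf {n : ℕ | ∃ S : Finset V,
        (∀ v : V, v ∉ S → ∃ u ∈ S, G.Adj u v) ∧ S.card = n} =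
      sInf {n : ℕ | ∃ S : Finset V,
        (∀ v : V, v ∉ S → ∃ u ∈ S, G.Adj u v) ∧
        (↑S : Set V).Pairwise (fun a b => ¬ G.Adj a b) ∧ S.card = n} ∧
    sSup {n : ℕ | ∃ S : Finset V,
        (↑S : Set V).Pairwise (fun a b => ¬ G.Adj a b) ∧ S.card = n} ≤
      2 * sInf {n : ℕ | ∃ S : Finset V,
        (∀ v : V, v ∉ S → ∃ u ∈ S, G.Adj u v) ∧ S.card = n} := by
  have hclaw := isClawFree_of_adj_iff_abs_sub_lt μ ε hG
  obtain ⟨S, hS, hSγ⟩ := Nat.sInf_mem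
    (s := {n | ∃ S : Finset V, (∀ v : V, v ∉ S → ∃ u ∈ S, G.Adj u v) ∧ S.card = n})
    ⟨_, univ, fun v hv => absurd (mem_univ v) hv, rfl⟩
  obtain ⟨T, hTdom, hTind, hTS⟩ := hclaw.exists_isIndepSet_isDominating_card_le (S := S) hS
  refine ⟨le_antisymm ?_ ?_, ?_⟩
  · exact csInf_le_csInf (OrderBot.bddBelow _) ⟨_, T, hTdom, hTind, rfl⟩
      fun n ⟨P, hPdom, _, hPn⟩ => ⟨P, hPdom, hPn⟩
  · rw [← hSγ]
    exact le_trans (Nat.sInf_le ⟨T, hTdom, hTind, rfl⟩) hTS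
  · refine csSup_le ⟨0, ∅, by simp, rfl⟩ fun n ⟨P, hP, hPn⟩ => ?_
    rw [← hSγ, ← hPn]
    exact hclaw.card_le_two_mul_of_isDominating hS hP

/-- For the similarity graph on a finite nonempty vertex set, the domination number
equals the independent domination number and is at least half of the independence
number: `γ(G) = i(G) ≥ α(G)/2`. -/
theorem similarity_graph_domination_numbers {V : Type*} [Fintype V] [Nonempty V]
    (μ : V → ℝ) (ε : ℝ) (hε : 0 < ε) (G : SimpleGraph V)
    (hG : ∀ i j : V, G.Adj i j ↔ i ≠ j ∧ |μ i - μ j| < ε) :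
    sInf {n : ℕ | ∃ S : Finset V,
        (∀ v : V, v ∉ S → ∃ u ∈ S, G.Adj u v) ∧ S.card = n} =
      sInf {n : ℕ | ∃ S : Finset V,
        (∀ v : V, v ∉ S → ∃ u ∈ S, G.Adj u v) ∧
        (↑S : Set V).Pairwise (fun a b => ¬ G.Adj a b) ∧ S.card = n} ∧
    sSup {n : ℕ | ∃ S : Finset V,
        (↑S : Set V).Pairwise (fun a b => ¬ G.Adj a b) ∧ S.card = n} ≤
      2 * sInf {n : ℕ | ∃ S : Finset V,
        (∀ v : V, v ∉ S → ∃ u ∈ S, G.Adj u v) ∧ S.card = n} :=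
  similarity_graph_domination_numbers_general μ ε G hG
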